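/- Fix an integer k ≥ 1, and let r_ℓ and p_ℓ (0 ≤ ℓ ≤ k) be as in the eigenvector-branch setup. Suppose (η⁺, ξ⁺, λ⁺) and (η⁻, ξ⁻, λ⁻) are real-analytic solution branches on an interval (−δ, δ) of the system λ(ε)ξ_ℓ(ε) = r_ℓ(ε)ξ_ℓ(ε) + η(ε)p_ℓ(ε) (0 ≤ ℓ ≤ k) with Σ_{ℓ=0}^{k} p_ℓ(ε)ξ_ℓ(ε) = 1, η(0) = k, λ(0) = k, where ξ⁺_0 ≡ 1 and ξ⁻_0 ≡ −1. Then λ⁺(ε)/η⁺(ε) − λ⁻(ε)/η⁻(ε) = 2√(k!) ε^k + O(ε^{k+1}) as ε → 0. -/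

import Mathlib

open scoped BigOperators

/-- `r_ℓ(ε) = (k−ℓ)(1−(k+ℓ)ε²) − ℓε²` (the rescaled eigenvalue `ε²λ_ℓ` under `n = 1/ε²`). -/
noncomputable def rFun (k ℓ : ℕ) (ε : ℝ) : ℝ :=
  ((k : ℝ) - ℓ) * (1 - ((k : ℝ) + ℓ) * ε ^ 2) - ℓ * ε ^ 2

/-- `p_ℓ(ε) = ε^{k−ℓ} √( k!(1−(2ℓ−1)ε²) / ( ℓ!(1−(ℓ−1)ε²)(1−ℓε²)⋯(1−(k−1)ε²) ) )`
(the overlap `‖P_ℓ|w⟩‖` under `n = 1/ε²`). -/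
noncomputable def pFun (k ℓ : ℕ) (ε : ℝ) : ℝ :=
  ε ^ (k - ℓ) *
    Real.sqrt ((k.factorial : ℝ) * (1 - (2 * (ℓ : ℝ) - 1) * ε ^ 2) /
      ((ℓ.factorial : ℝ) *
        ∏ j ∈ Finset.range (k - ℓ + 1), (1 - (((ℓ : ℝ) - 1) + j) * ε ^ 2)))

/-!
The `ℓ = 0` equation gives `λ^± = r₀ ± η^± p₀`, so
`λ⁺/η⁺ − λ⁻/η⁻ = 2 p₀ + r₀ (η⁻ − η⁺)/(η⁺η⁻)`, and `p₀ = √(k!) εᵏ + O(εᵏ⁺¹)`; it remains to show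
`η⁺ − η⁻ = O(εᵏ⁺¹)`. Solving the equations `ℓ ≥ 1` for `ξ_ℓ` and inserting them into the
normalisation gives `η^± S(λ^±) = 1 ∓ p₀` with `S(μ) = ∑_{ℓ ≥ 1} p_ℓ² / (μ − r_ℓ)`. Since moreover
`λ⁺ − λ⁻ = (η⁺ + η⁻) p₀`, one finds `(η⁺ − η⁻) S⁺ S⁻ = p₀ ((η⁺ + η⁻) T − S⁺ − S⁻)` with
`T = ∑_{ℓ ≥ 1} p_ℓ² / ((λ⁺ − r_ℓ)(λ⁻ − r_ℓ))`. At `ε = 0` only the term `ℓ = k` survives, so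
`S^±(0) = 1/k` and `T(0) = 1/k²`: the bracket is differentiable and vanishes at `0`, hence is
`O(ε)`, while `p₀ = O(εᵏ)`.
-/

open Asymptotics Filter Topology Finset
open scoped Nat

noncomputable def pFunRadicand (k ℓ : ℕ) (ε : ℝ) : ℝ :=
  (k ! : ℝ) * (1 - (2 * (ℓ : ℝ) - 1) * ε ^ 2) /
    ((ℓ ! : ℝ) * ∏ j ∈ range (k - ℓ + 1), (1 - (((ℓ : ℝ) - 1) + j) * ε ^ 2))

noncomputable def resolventSum (k : ℕ) (μ ε : ℝ) : ℝ :=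
  ∑ i ∈ range k, pFun k (i + 1) ε ^ 2 / (μ - rFun k (i + 1) ε)

noncomputable def resolventSum₂ (k : ℕ) (μ ν ε : ℝ) : ℝ :=
  ∑ i ∈ range k, pFun k (i + 1) ε ^ 2 / ((μ - rFun k (i + 1) ε) * (ν - rFun k (i + 1) ε))

section pFun

variable (k ℓ : ℕ)

theorem pFun_eq (ε : ℝ) : pFun k ℓ ε = ε ^ (k - ℓ) * √(pFunRadicand k ℓ ε) := rfl

theorem pFunRadicand_zero : pFunRadicand k ℓ 0 = k ! / ℓ ! := by
  simp [pFunRadicand]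

theorem differentiableAt_pFunRadicand : DifferentiableAt ℝ (pFunRadicand k ℓ) 0 := by
  unfold pFunRadicand
  fun_prop (disch := simp [Nat.factorial_ne_zero])

theorem differentiableAt_sqrt_pFunRadicand :
    DifferentiableAt ℝ (fun ε => √(pFunRadicand k ℓ ε)) 0 :=
  (differentiableAt_pFunRadicand k ℓ).sqrt (by rw [pFunRadicand_zero]; positivity)

theorem differentiableAt_pFun : DifferentiableAt ℝ (pFun k ℓ) 0 :=
  (differentiableAt_pow _).mul (differentiableAt_sqrt_pFunRadicand k ℓ)

variable {k ℓ}

theorem pFun_zero_of_lt (h : ℓ < k) : pFun k ℓ 0 = 0 := by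
  simp [pFun_eq, Nat.sub_ne_zero_of_lt h]

theorem pFun_self_zero : pFun k k 0 = 1 := by
  simp [pFun_eq, pFunRadicand_zero, Nat.factorial_ne_zero]

variable (k)

theorem pFun_zero_sub_isBigO :
    (fun ε => pFun k 0 ε - √(k ! : ℝ) * ε ^ k) =O[𝓝 0] fun ε => ε ^ (k + 1) := by
  have h := (isBigO_refl (fun ε : ℝ => ε ^ k) (𝓝 0)).mul
    (differentiableAt_sqrt_pFunRadicand k 0).isBigO_sub
  simp only [pFunRadicand_zero, Nat.factorial_zero, Nat.cast_one, div_one, sub_zero] at h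
  refine h.congr (fun ε => ?_) fun ε => (pow_succ ε k).symm
  rw [pFun_eq, Nat.sub_zero]
  ring

theorem pFun_zero_isBigO : pFun k 0 =O[𝓝 0] fun ε => ε ^ k := by
  have h := (pFun_zero_sub_isBigO k).trans (isLittleO_pow_pow k.lt_succ_self).isBigO
  simpa using h.add ((isBigO_refl (fun ε : ℝ => ε ^ k) (𝓝 0)).const_mul_left √(k ! : ℝ))

end pFun

section rFun

theorem differentiable_rFun (k ℓ : ℕ) : Differentiable ℝ (rFun k ℓ) := by
  unfold rFun; fun_prop

theorem self_sub_rFun_zero (k ℓ : ℕ) : (k : ℝ) - rFun k ℓ 0 = ℓ := by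
  simp [rFun]

theorem sub_rFun_succ_zero_ne_zero {k : ℕ} {μ : ℝ} (hμ : μ = k) (i : ℕ) :
    μ - rFun k (i + 1) 0 ≠ 0 := by
  rw [hμ, self_sub_rFun_zero]
  positivity

theorem eventually_sub_rFun_ne_zero {k : ℕ} {μ : ℝ → ℝ} (hμ : ContinuousAt μ 0)
    (hμ0 : μ 0 = k) : ∀ᶠ ε in 𝓝 0, ∀ i ∈ range k, μ ε - rFun k (i + 1) ε ≠ 0 := by
  rw [eventually_all_finset]
  intro i _
  exact (hμ.sub (differentiable_rFun k (i + 1)).continuous.continuousAt).eventually_ne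
    (sub_rFun_succ_zero_ne_zero hμ0 i)

end rFun

section resolventSum

variable {k : ℕ}

theorem sum_pFun_sq_mul_zero (hk : 1 ≤ k) (g : ℕ → ℝ) :
    ∑ i ∈ range k, pFun k (i + 1) 0 ^ 2 * g i = g (k - 1) := by
  rw [sum_eq_single_of_mem (k - 1) (mem_range.mpr (by omega))]
  · rw [Nat.sub_add_cancel hk, pFun_self_zero, one_pow, one_mul]
  · intro i hi hne
    rw [pFun_zero_of_lt (by rw [mem_range] at hi; omega), zero_pow two_ne_zero, zero_mul]

theorem resolventSum_zero (hk : 1 ≤ k) : resolventSum k k 0 = 1 / k := by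
  simp only [resolventSum, div_eq_mul_inv, self_sub_rFun_zero]
  rw [sum_pFun_sq_mul_zero hk (fun i => ((i + 1 : ℕ) : ℝ)⁻¹), Nat.sub_add_cancel hk, one_mul]

theorem resolventSum₂_zero (hk : 1 ≤ k) : resolventSum₂ k k k 0 = 1 / k ^ 2 := by
  simp only [resolventSum₂, div_eq_mul_inv, self_sub_rFun_zero]
  rw [sum_pFun_sq_mul_zero hk (fun i => (((i + 1 : ℕ) : ℝ) * ((i + 1 : ℕ) : ℝ))⁻¹),
    Nat.sub_add_cancel hk, one_mul, sq]

theorem resolventSum_sub_resolventSum {μ ν ε : ℝ}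
    (hμ : ∀ i ∈ range k, μ - rFun k (i + 1) ε ≠ 0) (hν : ∀ i ∈ range k, ν - rFun k (i + 1) ε ≠ 0) :
    resolventSum k ν ε - resolventSum k μ ε = (μ - ν) * resolventSum₂ k μ ν ε := by
  simp only [resolventSum, resolventSum₂, ← sum_sub_distrib, mul_sum]
  refine sum_congr rfl fun i hi => ?_
  have := hμ i hi
  have := hν i hi
  field_simp
  ring

theorem differentiableAt_resolventSum {μ : ℝ → ℝ} (hμ : DifferentiableAt ℝ μ 0)
    (hμ0 : μ 0 = k) : DifferentiableAt ℝ (fun ε => resolventSum k (μ ε) ε) 0 := by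
  refine DifferentiableAt.fun_sum fun i _ => ?_
  exact ((differentiableAt_pFun k (i + 1)).pow 2).div
    (hμ.sub (differentiable_rFun k (i + 1) 0)) (sub_rFun_succ_zero_ne_zero hμ0 i)

theorem differentiableAt_resolventSum₂ {μ ν : ℝ → ℝ} (hμ : DifferentiableAt ℝ μ 0)
    (hν : DifferentiableAt ℝ ν 0) (hμ0 : μ 0 = k) (hν0 : ν 0 = k) :
    DifferentiableAt ℝ (fun ε => resolventSum₂ k (μ ε) (ν ε) ε) 0 := by
  refine DifferentiableAt.fun_sum fun i _ => ?_
  exact ((differentiableAt_pFun k (i + 1)).pow 2).div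
    ((hμ.sub (differentiable_rFun k (i + 1) 0)).mul (hν.sub (differentiable_rFun k (i + 1) 0)))
    (mul_ne_zero (sub_rFun_succ_zero_ne_zero hμ0 i) (sub_rFun_succ_zero_ne_zero hν0 i))

end resolventSum

section branch

variable {k : ℕ}

theorem mul_resolventSum_of_branch {s η μ ε : ℝ} {ξ : ℕ → ℝ} (hξ0 : ξ 0 = s)
    (hnorm : ∑ ℓ ∈ range (k + 1), pFun k ℓ ε * ξ ℓ = 1)
    (heig : ∀ ℓ ≤ k, μ * ξ ℓ = rFun k ℓ ε * ξ ℓ + η * pFun k ℓ ε)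
    (hD : ∀ i ∈ range k, μ - rFun k (i + 1) ε ≠ 0) :
    η * resolventSum k μ ε = 1 - s * pFun k 0 ε := by
  rw [sum_range_succ', hξ0] at hnorm
  rw [resolventSum, mul_sum, ← hnorm, mul_comm s, add_sub_cancel_right]
  refine sum_congr rfl fun i hi => ?_
  have hDi := hD i hi
  have heigi := heig (i + 1) (by rw [mem_range] at hi; omega)
  field_simp
  linear_combination -pFun k (i + 1) ε * heigi

theorem eventually_branch_eqs {δ s : ℝ} (hδ : 0 < δ) (hs : s * s = 1) {η μ : ℝ → ℝ}
    {ξ : ℕ → ℝ → ℝ} (hμ : ContinuousAt μ 0) (hμ0 : μ 0 = k)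
    (hξ0 : ∀ ε ∈ Set.Ioo (-δ) δ, ξ 0 ε = s)
    (hnorm : ∀ ε ∈ Set.Ioo (-δ) δ, ∑ ℓ ∈ range (k + 1), pFun k ℓ ε * ξ ℓ ε = 1)
    (heig : ∀ ε ∈ Set.Ioo (-δ) δ, ∀ ℓ ≤ k,
      μ ε * ξ ℓ ε = rFun k ℓ ε * ξ ℓ ε + η ε * pFun k ℓ ε) :
    ∀ᶠ ε in 𝓝 0, μ ε = rFun k 0 ε + s * η ε * pFun k 0 ε ∧
      η ε * resolventSum k (μ ε) ε = 1 - s * pFun k 0 ε := by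
  filter_upwards [Ioo_mem_nhds (neg_neg_iff_pos.mpr hδ) hδ, eventually_sub_rFun_ne_zero hμ hμ0]
    with ε hε hD
  have heig0 := heig ε hε 0 (Nat.zero_le k)
  rw [hξ0 ε hε] at heig0
  refine ⟨?_, mul_resolventSum_of_branch (hξ0 ε hε) (hnorm ε hε) (heig ε hε) hD⟩
  linear_combination s * heig0 - (μ ε - rFun k 0 ε) * hs

end branch

theorem isBigO_sub_of_branches {k : ℕ} (hk : 1 ≤ k) {ηp ηm lp lm : ℝ → ℝ}
    (hηp : DifferentiableAt ℝ ηp 0) (hηm : DifferentiableAt ℝ ηm 0)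
    (hlp : DifferentiableAt ℝ lp 0) (hlm : DifferentiableAt ℝ lm 0)
    (hηp0 : ηp 0 = k) (hηm0 : ηm 0 = k) (hlp0 : lp 0 = k) (hlm0 : lm 0 = k)
    (hnormp : ∀ᶠ ε in 𝓝 0, ηp ε * resolventSum k (lp ε) ε = 1 - pFun k 0 ε)
    (hnormm : ∀ᶠ ε in 𝓝 0, ηm ε * resolventSum k (lm ε) ε = 1 + pFun k 0 ε)
    (hl : ∀ᶠ ε in 𝓝 0, lp ε - lm ε = (ηp ε + ηm ε) * pFun k 0 ε) :
    (fun ε => ηp ε - ηm ε) =O[𝓝 0] fun ε => ε ^ (k + 1) := by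
  set Sp := fun ε => resolventSum k (lp ε) ε
  set Sm := fun ε => resolventSum k (lm ε) ε
  set B := fun ε => (ηp ε + ηm ε) * resolventSum₂ k (lp ε) (lm ε) ε - Sp ε - Sm ε
  have hSp := differentiableAt_resolventSum hlp hlp0
  have hSm := differentiableAt_resolventSum hlm hlm0
  have hB0 : B 0 = 0 := by
    simp only [B, Sp, Sm, hηp0, hηm0, hlp0, hlm0, resolventSum_zero hk, resolventSum₂_zero hk]
    have : (k : ℝ) ≠ 0 := by positivity
    field_simp
    ring
  have hBd : DifferentiableAt ℝ B 0 :=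
    ((hηp.add hηm).mul (differentiableAt_resolventSum₂ hlp hlm hlp0 hlm0)).sub hSp |>.sub hSm
  have hB : B =O[𝓝 0] fun ε => ε := by simpa [hB0] using hBd.isBigO_sub
  have hS0 : Sp 0 * Sm 0 ≠ 0 := by
    simp only [Sp, Sm, hlp0, hlm0, resolventSum_zero hk]
    positivity
  have hS : ContinuousAt (fun ε => Sp ε * Sm ε) 0 := hSp.continuousAt.mul hSm.continuousAt
  have hkey : ∀ᶠ ε in 𝓝 0, pFun k 0 ε * B ε * (Sp ε * Sm ε)⁻¹ = ηp ε - ηm ε := by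
    filter_upwards [hnormp, hnormm, hl, eventually_sub_rFun_ne_zero hlp.continuousAt hlp0,
      eventually_sub_rFun_ne_zero hlm.continuousAt hlm0, hS.eventually_ne hS0]
      with ε hpε hmε hlε hDp hDm hSε
    have hdiff := resolventSum_sub_resolventSum hDp hDm
    have hprod : (ηp ε - ηm ε) * (Sp ε * Sm ε) = pFun k 0 ε * B ε := by
      linear_combination Sm ε * hpε - Sp ε * hmε + hdiff + resolventSum₂ k (lp ε) (lm ε) ε * hlε
    rw [← hprod, mul_inv_cancel_right₀ hSε]
  have h := ((pFun_zero_isBigO k).mul hB).mul ((hS.inv₀ hS0).isBigO_one ℝ)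
  simpa [pow_succ] using h.congr' hkey EventuallyEq.rfl

theorem div_sub_div_sub_isBigO {k : ℕ} (hk : 1 ≤ k) {ηp ηm lp lm : ℝ → ℝ}
    (hηp : ContinuousAt ηp 0) (hηm : ContinuousAt ηm 0) (hηp0 : ηp 0 = k) (hηm0 : ηm 0 = k)
    (hlp : ∀ᶠ ε in 𝓝 0, lp ε = rFun k 0 ε + ηp ε * pFun k 0 ε)
    (hlm : ∀ᶠ ε in 𝓝 0, lm ε = rFun k 0 ε - ηm ε * pFun k 0 ε)
    (hη : (fun ε => ηp ε - ηm ε) =O[𝓝 0] fun ε => ε ^ (k + 1)) :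
    (fun ε => lp ε / ηp ε - lm ε / ηm ε - 2 * √(k ! : ℝ) * ε ^ k) =O[𝓝 0]
      fun ε => ε ^ (k + 1) := by
  have hk0 : (k : ℝ) ≠ 0 := Nat.cast_ne_zero.mpr (by omega)
  have hc : ContinuousAt (fun ε => rFun k 0 ε / (ηp ε * ηm ε)) 0 :=
    (differentiable_rFun k 0).continuous.continuousAt.div (hηp.mul hηm)
      (by rw [hηp0, hηm0]; positivity)
  have hA := hη.neg_left.mul (hc.isBigO_one ℝ)
  simp only [mul_one] at hA
  have h := hA.add ((pFun_zero_sub_isBigO k).const_mul_left 2)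
  refine h.congr' ?_ EventuallyEq.rfl
  filter_upwards [hlp, hlm, hηp.eventually_ne (hηp0 ▸ hk0), hηm.eventually_ne (hηm0 ▸ hk0)]
    with ε hlpε hlmε hηpε hηmε
  rw [hlpε, hlmε]
  field_simp
  ring

open Asymptotics in
theorem branch_phase_difference_general (k : ℕ) (hk : 1 ≤ k)
    (δ : ℝ) (hδ : 0 < δ)
    (ηp : ℝ → ℝ) (ξp : ℕ → ℝ → ℝ) (lamp : ℝ → ℝ)
    (ηm : ℝ → ℝ) (ξm : ℕ → ℝ → ℝ) (lamm : ℝ → ℝ)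
    (hηp : ∀ x ∈ Set.Ioo (-δ) δ, AnalyticAt ℝ ηp x)
    (hlamp : ∀ x ∈ Set.Ioo (-δ) δ, AnalyticAt ℝ lamp x)
    (hηm : ∀ x ∈ Set.Ioo (-δ) δ, AnalyticAt ℝ ηm x)
    (hlamm : ∀ x ∈ Set.Ioo (-δ) δ, AnalyticAt ℝ lamm x)
    (hηp0 : ηp 0 = k) (hlamp0 : lamp 0 = k)
    (hηm0 : ηm 0 = k) (hlamm0 : lamm 0 = k)
    (hξp0 : ∀ ε ∈ Set.Ioo (-δ) δ, ξp 0 ε = 1)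
    (hξm0 : ∀ ε ∈ Set.Ioo (-δ) δ, ξm 0 ε = -1)
    (hnormp : ∀ ε ∈ Set.Ioo (-δ) δ,
      (∑ ℓ ∈ Finset.range (k + 1), pFun k ℓ ε * ξp ℓ ε) = 1)
    (hnormm : ∀ ε ∈ Set.Ioo (-δ) δ,
      (∑ ℓ ∈ Finset.range (k + 1), pFun k ℓ ε * ξm ℓ ε) = 1)
    (heigp : ∀ ε ∈ Set.Ioo (-δ) δ, ∀ ℓ ≤ k,
      lamp ε * ξp ℓ ε = rFun k ℓ ε * ξp ℓ ε + ηp ε * pFun k ℓ ε)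
    (heigm : ∀ ε ∈ Set.Ioo (-δ) δ, ∀ ℓ ≤ k,
      lamm ε * ξm ℓ ε = rFun k ℓ ε * ξm ℓ ε + ηm ε * pFun k ℓ ε) :
    (fun ε : ℝ => lamp ε / ηp ε - lamm ε / ηm ε - 2 * Real.sqrt (k.factorial) * ε ^ k)
      =O[nhds 0] fun ε : ℝ => ε ^ (k + 1) := by
  have h0 : (0 : ℝ) ∈ Set.Ioo (-δ) δ := ⟨neg_neg_iff_pos.mpr hδ, hδ⟩
  have hp := eventually_branch_eqs hδ (one_mul 1) (hlamp 0 h0).continuousAt hlamp0 hξp0 hnormp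
    heigp
  have hm := eventually_branch_eqs hδ (by norm_num) (hlamm 0 h0).continuousAt hlamm0 hξm0 hnormm
    heigm
  refine div_sub_div_sub_isBigO hk (hηp 0 h0).continuousAt (hηm 0 h0).continuousAt hηp0 hηm0
    (hp.mono fun ε h => by linear_combination h.1) (hm.mono fun ε h => by linear_combination h.1)
    ?_
  exact isBigO_sub_of_branches hk (hηp 0 h0).differentiableAt (hηm 0 h0).differentiableAt
    (hlamp 0 h0).differentiableAt (hlamm 0 h0).differentiableAt hηp0 hηm0 hlamp0 hlamm0
    (hp.mono fun ε h => by linear_combination h.2) (hm.mono fun ε h => by linear_combination h.2)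
    ((hp.and hm).mono fun ε h => by linear_combination h.1.1 - h.2.1)

open Asymptotics in
/-- for two real-analytic eigenvector branches `(η⁺, ξ⁺, λ⁺)` and
`(η⁻, ξ⁻, λ⁻)` of the setup with `ξ⁺_0 ≡ 1` and `ξ⁻_0 ≡ −1`, one has
`λ⁺(ε)/η⁺(ε) − λ⁻(ε)/η⁻(ε) = 2√(k!)·ε^k + O(ε^{k+1})` as `ε → 0`. -/
theorem branch_phase_difference (k : ℕ) (hk : 1 ≤ k)
    (δ : ℝ) (hδ : 0 < δ)
    (ηp : ℝ → ℝ) (ξp : ℕ → ℝ → ℝ) (lamp : ℝ → ℝ)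
    (ηm : ℝ → ℝ) (ξm : ℕ → ℝ → ℝ) (lamm : ℝ → ℝ)
    (hηp : ∀ x ∈ Set.Ioo (-δ) δ, AnalyticAt ℝ ηp x)
    (hξp : ∀ ℓ ≤ k, ∀ x ∈ Set.Ioo (-δ) δ, AnalyticAt ℝ (ξp ℓ) x)
    (hlamp : ∀ x ∈ Set.Ioo (-δ) δ, AnalyticAt ℝ lamp x)
    (hηm : ∀ x ∈ Set.Ioo (-δ) δ, AnalyticAt ℝ ηm x)
    (hξm : ∀ ℓ ≤ k, ∀ x ∈ Set.Ioo (-δ) δ, AnalyticAt ℝ (ξm ℓ) x)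
    (hlamm : ∀ x ∈ Set.Ioo (-δ) δ, AnalyticAt ℝ lamm x)
    (hηp0 : ηp 0 = k) (hlamp0 : lamp 0 = k)
    (hηm0 : ηm 0 = k) (hlamm0 : lamm 0 = k)
    (hξp0 : ∀ ε ∈ Set.Ioo (-δ) δ, ξp 0 ε = 1)
    (hξm0 : ∀ ε ∈ Set.Ioo (-δ) δ, ξm 0 ε = -1)
    (hnormp : ∀ ε ∈ Set.Ioo (-δ) δ,
      (∑ ℓ ∈ Finset.range (k + 1), pFun k ℓ ε * ξp ℓ ε) = 1)
    (hnormm : ∀ ε ∈ Set.Ioo (-δ) δ,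
      (∑ ℓ ∈ Finset.range (k + 1), pFun k ℓ ε * ξm ℓ ε) = 1)
    (heigp : ∀ ε ∈ Set.Ioo (-δ) δ, ∀ ℓ ≤ k,
      lamp ε * ξp ℓ ε = rFun k ℓ ε * ξp ℓ ε + ηp ε * pFun k ℓ ε)
    (heigm : ∀ ε ∈ Set.Ioo (-δ) δ, ∀ ℓ ≤ k,
      lamm ε * ξm ℓ ε = rFun k ℓ ε * ξm ℓ ε + ηm ε * pFun k ℓ ε) :
    (fun ε : ℝ => lamp ε / ηp ε - lamm ε / ηm ε - 2 * Real.sqrt (k.factorial) * ε ^ k)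
      =O[nhds 0] fun ε : ℝ => ε ^ (k + 1) :=
  branch_phase_difference_general k hk δ hδ ηp ξp lamp ηm ξm lamm hηp hlamp hηm hlamm hηp0 hlamp0
    hηm0 hlamm0 hξp0 hξm0 hnormp hnormm heigp heigm
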